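/- arXiv:2602.19483 — 2 statements merged into one kernel-verified Lean document; each statement's English description precedes it below -/
import Mathlib

section
/- Let V₁,…,Vₙ and V be exchangeable real random variables (e.g. i.i.d.). Define q̂ as the ⌈(1−α)(n+1)⌉-th smallest value among V₁,…,Vₙ (with q̂ = +∞ if ⌈(1−α)(n+1)⌉ > n). Then P(V ≤ q̂) ≥ 1 − α. -/
/-!
Let `R j` be the number of scores strictly below `V j`. Whatever the values, at least `k` of the
`n + 1` indices satisfy `R j < k`: an index minimising `V` among those with `R j ≥ k` has only
indices with `R i < k` below it. Hence the probabilities of the events `{R j < k}` sum to at least `k`,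
and exchangeability makes them equally likely, so `P(R (n+1) < k) ≥ k / (n + 1) ≥ 1 - α`.
Finally `R (n+1) < k` says that fewer than `k` calibration scores lie below `V`, i.e. `V ≤ q̂`.
-/

open MeasureTheory ProbabilityTheory

open Finset in
def countLT {ι α : Type*} [Fintype ι] [LT α] [DecidableLT α] (x : ι → α) (t : α) : ℕ :=
  #{i | x i < t}

section Combinatorics

open Finset

variable {ι α : Type*} [Fintype ι] [LinearOrder α]

lemma countLT_comp_equiv (x : ι → α) (σ : Equiv.Perm ι) (t : α) :
    countLT (x ∘ σ) t = countLT x t :=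
  card_equiv σ (by simp)

lemma countLT_castSucc_last {n : ℕ} (x : Fin (n + 1) → α) :
    countLT (fun i : Fin n => x i.castSucc) (x (Fin.last n)) = countLT x (x (Fin.last n)) := by
  rw [countLT, countLT, card_filter, card_filter, Fin.sum_univ_castSucc]
  simp

lemma le_card_countLT_lt (x : ι → α) {k : ℕ} (hk : k ≤ Fintype.card ι) :
    k ≤ #{j | countLT x (x j) < k} := by
  classical
  by_contra! hfew
  set A : Finset ι := {j | countLT x (x j) < k}
  have hcompl : #A + #Aᶜ = Fintype.card ι := card_add_card_compl A
  obtain ⟨j, hjA, hmin⟩ := Aᶜ.exists_min_image x (card_pos.mp (by omega))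
  have hbelow : countLT x (x j) ≤ #A :=
    card_le_card fun i hi => by
      by_contra hiA
      exact (mem_filter.mp hi).2.not_ge (hmin i (mem_compl.mpr hiA))
  simp only [A, mem_compl, mem_filter, mem_univ, true_and, not_lt] at hjA
  omega

end Combinatorics

lemma List.Pairwise.le_getElem_of_countP_le {α : Type*} [LinearOrder α] {l : List α}
    (hl : l.Pairwise (· ≤ ·)) {t : α} {i : ℕ} (hi : i < l.length)
    (hcount : l.countP (· < t) ≤ i) : t ≤ l[i] := by
  by_contra! hlt
  have hprefix : (l.take (i + 1)).countP (· < t) = i + 1 := by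
    rw [List.countP_eq_length.mpr, List.length_take_of_le hi]
    intro a ha
    obtain ⟨m, hm, rfl⟩ := List.mem_take_iff_getElem.mp ha
    have hmi : (⟨m, by omega⟩ : Fin l.length) ≤ ⟨i, hi⟩ := by simp; omega
    simpa using (hl.rel_get_of_le hmi).trans_lt hlt
  have := (List.take_sublist (i + 1) l).countP_le (p := (· < t))
  omega

section Measure

open Finset

variable {Ω ι : Type*} [MeasurableSpace Ω] [Fintype ι]

lemma natCast_mul_measure_univ_le_sum_measure (μ : Measure Ω) {A : ι → Set Ω}
    [∀ ω, DecidablePred fun j => ω ∈ A j]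
    (hA : ∀ j, MeasurableSet (A j)) {k : ℕ} (hcover : ∀ ω, k ≤ #{j | ω ∈ A j}) :
    k * μ Set.univ ≤ ∑ j, μ (A j) := by
  have hpoint : ∀ ω, (k : ENNReal) ≤ ∑ j, (A j).indicator 1 ω := fun ω => by
    have := hcover ω
    rw [card_filter] at this
    simp only [Set.indicator_apply, Pi.one_apply]
    exact_mod_cast this
  calc (k : ENNReal) * μ Set.univ = ∫⁻ _, (k : ENNReal) ∂μ := (lintegral_const _).symm
    _ ≤ ∫⁻ ω, ∑ j, (A j).indicator 1 ω ∂μ := lintegral_mono hpoint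
    _ = ∑ j, μ (A j) := by
      rw [lintegral_finsetSum _ fun j _ => measurable_one.indicator (hA j)]
      simp only [lintegral_indicator_one (hA _)]

variable {α : Type*} [LinearOrder α] [TopologicalSpace α] [OrderClosedTopology α]
  [SecondCountableTopology α] [MeasurableSpace α] [OpensMeasurableSpace α]

lemma Measurable.countLT {V : ι → Ω → α} (hV : ∀ i, Measurable (V i)) {f : Ω → α}
    (hf : Measurable f) : Measurable fun ω => countLT (V · ω) (f ω) := by
  classical
  simp only [_root_.countLT, card_filter]
  exact Finset.measurable_sum _ fun i _ =>
    Measurable.ite (measurableSet_lt (hV i) hf) measurable_const measurable_const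

lemma measurableSet_countLT_lt {V : ι → Ω → α} (hV : ∀ i, Measurable (V i)) (j : ι) (k : ℕ) :
    MeasurableSet {ω | countLT (V · ω) (V j ω) < k} :=
  measurableSet_lt (Measurable.countLT hV (hV j)) measurable_const

lemma measure_countLT_lt_eq [DecidableEq ι] {μ : Measure Ω} {V : ι → Ω → α}
    (hV : ∀ i, Measurable (V i))
    (hexch : ∀ π : Equiv.Perm ι,
      Measure.map (fun ω i => V (π i) ω) μ = Measure.map (fun ω i => V i ω) μ)
    (k : ℕ) (j j' : ι) :
    μ {ω | countLT (V · ω) (V j ω) < k} = μ {ω | countLT (V · ω) (V j' ω) < k} := by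
  set S : Set (ι → α) := {x | countLT x (x j') < k}
  have hS : MeasurableSet S := measurableSet_countLT_lt (fun i => measurable_pi_apply i) j' k
  have hswap : {ω | countLT (V · ω) (V j ω) < k} =
      (fun ω i => V (Equiv.swap j' j i) ω) ⁻¹' S := by
    ext ω
    simp only [S, Set.mem_ofPred_eq, Set.mem_preimage, Equiv.swap_apply_left]
    rw [← countLT_comp_equiv (V · ω) (Equiv.swap j' j)]
    rfl
  rw [hswap, ← Measure.map_apply (measurable_pi_lambda _ fun i => hV _) hS, hexch,
    Measure.map_apply (measurable_pi_lambda _ hV) hS]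
  rfl

end Measure

lemma le_getD_sort_of_countLT_lt {α : Type*} [LinearOrder α] {n : ℕ} (y : Fin n → α) {t : α}
    {k : ℕ} (hcount : countLT y t < k) (hk : k ≤ n) (d : α) :
    t ≤ ((Multiset.map y Finset.univ.val).sort (· ≤ ·)).getD (k - 1) d := by
  set s := Multiset.map y Finset.univ.val
  have hlen : (s.sort (· ≤ ·)).length = n := by simp [s]
  have hcountP : (s.sort (· ≤ ·)).countP (· < t) = countLT y t := by
    rw [← Multiset.coe_countP, Multiset.sort_eq, Multiset.countP_map]
    rfl
  rw [List.getD_eq_getElem _ _ (by omega)]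
  exact (Multiset.pairwise_sort s _).le_getElem_of_countP_le _ (by omega)

/-- Split conformal calibration guarantee: if `V₁,…,Vₙ,V` are exchangeable and `q̂` is the
`⌈(1−α)(n+1)⌉`-th smallest of `V₁,…,Vₙ` (with `q̂ = +∞`, i.e. the coverage event trivially
holds, when `⌈(1−α)(n+1)⌉ > n`), then `P(V ≤ q̂) ≥ 1 − α`. -/
theorem split_conformal_coverage
    {Ω : Type*} [MeasureSpace Ω] [IsProbabilityMeasure (ℙ : Measure Ω)]
    (n : ℕ) (V : Fin (n + 1) → Ω → ℝ) (hV : ∀ i, Measurable (V i))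
    (hexch : ∀ π : Equiv.Perm (Fin (n + 1)),
      Measure.map (fun ω i => V (π i) ω) ℙ = Measure.map (fun ω i => V i ω) ℙ)
    (α : ℝ) (hα : α ∈ Set.Ioo (0 : ℝ) 1)
    (k : ℕ) (hk : k = ⌈(1 - α) * (n + 1 : ℝ)⌉₊) :
    1 - α ≤ (ℙ {ω | k ≤ n → V (Fin.last n) ω ≤
      ((Multiset.map (fun i : Fin n => V i.castSucc ω) Finset.univ.val).sort
        (· ≤ ·)).getD (k - 1) 0}).toReal := by
  obtain ⟨hα0, -⟩ := hα
  set A : Fin (n + 1) → Set Ω := fun j => {ω | countLT (V · ω) (V j ω) < k}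
  have hk_le : k ≤ n + 1 := hk ▸ Nat.ceil_le.mpr (by push_cast; nlinarith)
  have hmass : (k : ENNReal) ≤ (n + 1) * ℙ (A (Fin.last n)) := by
    have := natCast_mul_measure_univ_le_sum_measure ℙ (fun j => measurableSet_countLT_lt hV j k)
      fun ω => le_card_countLT_lt (V · ω) (by simpa using hk_le)
    simpa [A, measure_countLT_lt_eq hV hexch k _ (Fin.last n)] using this
  have hsub : A (Fin.last n) ⊆ {ω | k ≤ n → V (Fin.last n) ω ≤
      ((Multiset.map (fun i : Fin n => V i.castSucc ω) Finset.univ.val).sort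
        (· ≤ ·)).getD (k - 1) 0} := fun ω hω hkn =>
    le_getD_sort_of_countLT_lt _ ((countLT_castSucc_last (V · ω)).trans_lt hω) hkn 0
  have hmass_real : (k : ℝ) ≤ (n + 1) * (ℙ (A (Fin.last n))).toReal := by
    simpa [ENNReal.toReal_mul, ENNReal.toReal_add] using ENNReal.toReal_mono (by finiteness) hmass
  calc 1 - α ≤ k / (n + 1) := by
        rw [le_div_iff₀ (by positivity), hk]
        exact Nat.le_ceil _
    _ ≤ (ℙ (A (Fin.last n))).toReal := by
        rw [div_le_iff₀ (by positivity)]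
        linarith
    _ ≤ _ := ENNReal.toReal_mono (measure_ne_top _ _) (measure_mono hsub)
end

section
/- Let V₁,…,Vₙ, V_{n+1} be i.i.d. with a continuous distribution and q̂ the ⌈(1−α)(n+1)⌉-th order statistic of V₁,…,Vₙ with ⌈(1−α)(n+1)⌉ ≤ n. Then P(V_{n+1} ≤ q̂) ≤ 1 − α + 1/(n+1). -/
/-!
Let `R` be the number of the first `n` scores lying strictly below `V_{n+1}`. If `V_{n+1} ≤ q̂`,
the `k`-th smallest of the first `n` scores, then `R < k`. Since the scores are i.i.d. and
atomless, their joint law is a permutation-invariant product measure under which ties are null;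
hence each of the `n + 1` scores has the same probability of having rank `< k`, while almost
surely exactly `k` of them do. So `P(R < k) = k / (n + 1)`, and
`k / (n + 1) = ⌈(1 - α)(n + 1)⌉ / (n + 1) < 1 - α + 1 / (n + 1)`.
-/

open MeasureTheory ProbabilityTheory Finset

section Rank

variable {ι α : Type*} [Fintype ι] [LinearOrder α]

theorem List.Pairwise.countP_lt_le_of_le_getElem {l : List α} (hl : l.Pairwise (· ≤ ·))
    {i : ℕ} (hi : i < l.length) {y : α} (hy : y ≤ l[i]) :
    l.countP (· < y) ≤ i := by
  have hdrop : (l.drop i).countP (· < y) = 0 := by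
    refine List.countP_eq_zero.2 fun a ha => ?_
    obtain ⟨j, hj, rfl⟩ := List.mem_iff_getElem.1 ha
    have hij : i + j < l.length := by rw [List.length_drop] at hj; omega
    have hle : l[i] ≤ l[i + j] :=
      hl.rel_get_of_le (a := ⟨i, hi⟩) (b := ⟨i + j, hij⟩) (by simp [Fin.le_def])
    rw [List.getElem_drop]
    simpa using hy.trans hle
  calc l.countP (· < y) = (l.take i).countP (· < y) + (l.drop i).countP (· < y) := by
        rw [← List.countP_append, List.take_append_drop]
    _ ≤ i := by
        rw [hdrop, add_zero]
        exact List.countP_le_length.trans (by simp)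

theorem card_filter_lt_le_of_le_getD_sort (x : ι → α) {i : ℕ} (hi : i < Fintype.card ι)
    (d : α) {y : α} (hy : y ≤ ((univ.val.map x).sort (· ≤ ·)).getD i d) :
    #{j | x j < y} ≤ i := by
  set l := (univ.val.map x).sort (· ≤ ·)
  have hlen : i < l.length := by simpa [l] using hi
  rw [List.getD_eq_getElem _ _ hlen] at hy
  calc #{j | x j < y} = (univ.val.map x).countP (· < y) := by
        rw [Multiset.countP_map]; rfl
    _ = l.countP (· < y) := by rw [← Multiset.coe_countP, Multiset.sort_eq]
    _ ≤ i := (Multiset.pairwise_sort _ _).countP_lt_le_of_le_getElem hlen hy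

/-- For injective `x`, the `0`-based position of `x j` in increasing order. -/
def strictRank (x : ι → α) (j : ι) : ℕ := #{i | x i < x j}

theorem strictRank_lt_strictRank {x : ι → α} {j j' : ι} (h : x j < x j') :
    strictRank x j < strictRank x j' := by
  refine card_lt_card ((ssubset_iff_of_subset fun i hi => ?_).2 ⟨j, ?_, ?_⟩)
  · simp only [mem_filter, mem_univ, true_and] at hi ⊢
    exact hi.trans h
  · simpa using h
  · simp

theorem strictRank_injective {x : ι → α} (hx : Function.Injective x) :
    Function.Injective (strictRank x) := by
  intro j j' h
  by_contra hne
  rcases lt_or_gt_of_ne (hx.ne hne) with hlt | hlt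
  · exact (strictRank_lt_strictRank hlt).ne h
  · exact (strictRank_lt_strictRank hlt).ne' h

theorem strictRank_lt_card (x : ι → α) (j : ι) : strictRank x j < Fintype.card ι :=
  card_lt_univ_of_notMem (x := j) (by simp)

theorem card_filter_strictRank_lt {x : ι → α} (hx : Function.Injective x) {k : ℕ}
    (hk : k ≤ Fintype.card ι) : #{j | strictRank x j < k} = k := by
  let r : ι → Fin (Fintype.card ι) := fun j => ⟨strictRank x j, strictRank_lt_card x j⟩
  have hr : Function.Bijective r :=
    (Fintype.bijective_iff_injective_and_card r).2
      ⟨fun j j' h => strictRank_injective hx (Fin.val_eq_of_eq h), by simp⟩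
  rw [card_equiv (Equiv.ofBijective r hr)
      (t := ({m | (m : ℕ) < k} : Finset (Fin (Fintype.card ι)))) (by simp [r]),
    Fin.card_filter_val_lt, min_eq_right hk]

theorem strictRank_comp_perm (x : ι → α) (σ : Equiv.Perm ι) (j : ι) :
    strictRank (x ∘ σ) j = strictRank x (σ j) :=
  card_equiv σ (by simp)

theorem strictRank_last {n : ℕ} (x : Fin (n + 1) → α) :
    strictRank x (Fin.last n) = #{i : Fin n | x i.castSucc < x (Fin.last n)} := by
  rw [strictRank, card_filter, card_filter, Fin.sum_univ_castSucc]
  simp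

end Rank

section Exchangeable

variable {ι α : Type*} [Fintype ι] [MeasurableSpace α]

theorem MeasureTheory.Measure.prod_diagonal_eq_zero [MeasurableEq α] (μ ν : Measure α) [SFinite ν]
    [NullSingletonClass ν] : μ.prod ν (Set.diagonal α) = 0 := by
  rw [Measure.measure_prod_null measurableSet_diagonal]
  exact Filter.Eventually.of_forall fun a => by simp [Set.preimage, Set.diagonal]

theorem measure_pi_coord_eq_coord_eq_zero [MeasurableEq α] (μ : Measure α)
    [IsProbabilityMeasure μ] [NullSingletonClass μ] {i j : ι} (hij : i ≠ j) :
    Measure.pi (fun _ : ι => μ) {x | x i = x j} = 0 := by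
  have hind : IndepFun (fun x : ι → α => x i) (fun x => x j) (Measure.pi fun _ => μ) :=
    (iIndepFun_pi (X := fun _ => id) fun _ => aemeasurable_id).indepFun hij
  have hlaw := (indepFun_iff_map_prod_eq_prod_map_map (measurable_pi_apply i).aemeasurable
    (measurable_pi_apply j).aemeasurable).1 hind
  rw [(measurePreserving_eval _ i).map_eq, (measurePreserving_eval _ j).map_eq] at hlaw
  change Measure.pi _ ((fun x : ι → α => (x i, x j)) ⁻¹' Set.diagonal α) = 0
  rw [← Measure.map_apply ((measurable_pi_apply i).prodMk (measurable_pi_apply j))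
    measurableSet_diagonal, hlaw, Measure.prod_diagonal_eq_zero]

theorem ae_pi_injective [MeasurableEq α] (μ : Measure α) [IsProbabilityMeasure μ]
    [NullSingletonClass μ] : ∀ᵐ x ∂Measure.pi (fun _ : ι => μ), Function.Injective x := by
  have hsub : {x : ι → α | ¬ Function.Injective x} ⊆ ⋃ (i) (j) (_ : i ≠ j), {x | x i = x j} := by
    intro x hx
    simp only [Function.Injective, not_forall] at hx
    obtain ⟨i, j, hxij, hij⟩ := hx
    simp only [Set.mem_iUnion]
    exact ⟨i, j, hij, hxij⟩
  exact measure_mono_null hsub <| measure_iUnion_null fun i => measure_iUnion_null fun j =>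
    measure_iUnion_null (measure_pi_coord_eq_coord_eq_zero μ)

theorem measurePreserving_comp_perm (μ : Measure α) [SigmaFinite μ] (σ : Equiv.Perm ι) :
    MeasurePreserving (fun x : ι → α => x ∘ σ) (Measure.pi fun _ => μ)
      (Measure.pi fun _ => μ) := by
  convert measurePreserving_piCongrLeft (fun _ : ι => μ) σ.symm using 1
  ext x i
  simpa using (MeasurableEquiv.piCongrLeft_apply_apply (β := fun _ => α) σ.symm x (σ i)).symm

end Exchangeable

section UniformRank

variable {ι : Type*} [Fintype ι]

theorem measurable_strictRank (j : ι) : Measurable fun x : ι → ℝ => strictRank x j := by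
  simp_rw [strictRank, card_filter]
  exact Finset.measurable_sum _ fun i _ => Measurable.ite
    (measurableSet_lt (measurable_pi_apply i) (measurable_pi_apply j)) measurable_const
    measurable_const

theorem measurableSet_strictRank_lt (j : ι) (k : ℕ) :
    MeasurableSet {x : ι → ℝ | strictRank x j < k} :=
  measurableSet_lt (measurable_strictRank j) measurable_const

theorem sum_measure_strictRank_lt (P : Measure (ι → ℝ)) [IsProbabilityMeasure P]
    (hP : ∀ᵐ x ∂P, Function.Injective x) {k : ℕ} (hk : k ≤ Fintype.card ι) :
    ∑ j, P {x | strictRank x j < k} = k := by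
  have hcount : ∀ᵐ x ∂P, ∑ j, {x : ι → ℝ | strictRank x j < k}.indicator 1 x = (k : ENNReal) := by
    filter_upwards [hP] with x hx
    have hcard := congrArg (Nat.cast (R := ENNReal)) (card_filter_strictRank_lt hx hk)
    rw [card_filter, Nat.cast_sum] at hcard
    simpa [Set.indicator_apply] using hcard
  calc ∑ j, P {x | strictRank x j < k}
      = ∑ j, ∫⁻ x, {x : ι → ℝ | strictRank x j < k}.indicator 1 x ∂P := by
        simp_rw [lintegral_indicator_one (measurableSet_strictRank_lt _ k)]
    _ = ∫⁻ x, ∑ j, {x : ι → ℝ | strictRank x j < k}.indicator 1 x ∂P :=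
        (lintegral_finsetSum _ fun j _ => measurable_one.indicator
          (measurableSet_strictRank_lt j k)).symm
    _ = k := by simp [lintegral_congr_ae hcount]

theorem measure_pi_strictRank_lt (μ : Measure ℝ) [IsProbabilityMeasure μ] [NullSingletonClass μ]
    (j : ι) {k : ℕ} (hk : k ≤ Fintype.card ι) :
    Measure.pi (fun _ : ι => μ) {x | strictRank x j < k} = k / Fintype.card ι := by
  classical
  have hexch : ∀ j', Measure.pi (fun _ : ι => μ) {x | strictRank x j' < k}
      = Measure.pi (fun _ : ι => μ) {x | strictRank x j < k} := fun j' => by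
    have hpre : (fun x : ι → ℝ => x ∘ Equiv.swap j j') ⁻¹' {x | strictRank x j < k}
        = {x | strictRank x j' < k} := by
      ext x
      simp [strictRank_comp_perm]
    rw [← hpre]
    exact (measurePreserving_comp_perm μ _).measure_preimage
      (measurableSet_strictRank_lt j k).nullMeasurableSet
  have hsum := sum_measure_strictRank_lt _ (ae_pi_injective μ) hk
  simp only [hexch, sum_const, card_univ, nsmul_eq_mul] at hsum
  have : Nonempty ι := ⟨j⟩
  exact (ENNReal.eq_div_iff (by simp) (by simp)).2 hsum

end UniformRank

theorem Nat.ceil_mul_div_lt_add_one_div {a m : ℝ} (ha : 0 ≤ a) (hm : 0 < m) :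
    ⌈a * m⌉₊ / m < a + 1 / m := by
  rw [div_lt_iff₀ hm, add_mul, one_div_mul_cancel hm.ne']
  exact Nat.ceil_lt_add_one (mul_nonneg ha hm.le)

/-- Upper bound for conformal coverage: for i.i.d. scores with a continuous (atomless)
distribution and `q̂` the `⌈(1−α)(n+1)⌉`-th order statistic of the first `n` scores
(with `⌈(1−α)(n+1)⌉ ≤ n`), `P(V_{n+1} ≤ q̂) ≤ 1 − α + 1/(n+1)`. -/
theorem split_conformal_coverage_upper
    {Ω : Type*} [MeasureSpace Ω] [IsProbabilityMeasure (ℙ : Measure Ω)]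
    (n : ℕ) (V : Fin (n + 1) → Ω → ℝ) (hV : ∀ i, Measurable (V i))
    (hindep : iIndepFun V ℙ)
    (μ : Measure ℝ) (hid : ∀ i, Measure.map (V i) ℙ = μ)
    (hatomless : ∀ x : ℝ, μ {x} = 0)
    (α : ℝ) (hα : α ∈ Set.Ioo (0 : ℝ) 1)
    (k : ℕ) (hk : k = ⌈(1 - α) * (n + 1 : ℝ)⌉₊) (hkn : k ≤ n) :
    (ℙ {ω | V (Fin.last n) ω ≤
      ((Multiset.map (fun i : Fin n => V i.castSucc ω) Finset.univ.val).sort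
        (· ≤ ·)).getD (k - 1) 0}).toReal ≤ 1 - α + 1 / (n + 1) := by
  have : IsProbabilityMeasure μ := hid 0 ▸ Measure.isProbabilityMeasure_map (hV 0).aemeasurable
  have : NullSingletonClass μ := ⟨hatomless⟩
  have hk1 : 1 ≤ k := hk ▸ Nat.one_le_ceil_iff.2 (by nlinarith [hα.2])
  have hT : Measurable fun ω i => V i ω := measurable_pi_lambda _ hV
  have hlaw : Measure.map (fun ω i => V i ω) ℙ = Measure.pi fun _ => μ := by
    simp_rw [hindep.map_fun_eq_pi_map fun i => (hV i).aemeasurable, hid]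
  have hle : ℙ {ω | V (Fin.last n) ω ≤
      ((Multiset.map (fun i : Fin n => V i.castSucc ω) Finset.univ.val).sort
        (· ≤ ·)).getD (k - 1) 0} ≤ ENNReal.ofReal (k / (n + 1)) := by
    calc _ ≤ ℙ ((fun ω i => V i ω) ⁻¹' {x | strictRank x (Fin.last n) < k}) :=
          measure_mono fun ω hω => by
            have := card_filter_lt_le_of_le_getD_sort (fun i : Fin n => V i.castSucc ω)
              (i := k - 1) (by simp; omega) 0 hω
            rw [Set.mem_preimage, Set.mem_ofPred_eq, strictRank_last]
            omega
      _ = k / Fintype.card (Fin (n + 1)) := by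
          rw [← Measure.map_apply hT (measurableSet_strictRank_lt _ _), hlaw,
            measure_pi_strictRank_lt μ _ (by simp; omega)]
      _ = ENNReal.ofReal (k / (n + 1)) := by
          rw [ENNReal.ofReal_div_of_pos (by positivity), ENNReal.ofReal_natCast, ← Nat.cast_add_one,
            ENNReal.ofReal_natCast, Fintype.card_fin]
  calc _ ≤ (k / (n + 1) : ℝ) := ENNReal.toReal_le_of_le_ofReal (by positivity) hle
    _ ≤ 1 - α + 1 / (n + 1) := by
      rw [hk]
      exact (Nat.ceil_mul_div_lt_add_one_div (by linarith [hα.2]) (by positivity)).le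
end
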